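/- arXiv:2505.11688 — 3 statements merged into one kernel-verified Lean document; each statement's English description precedes it below -/
import Mathlib

section
/- Under the contraction assumption, the observation $y_t = g(x_t, u_t)$ (where $x$ evolves by $x_{t+1}=f(x_t,u_t,w_t)$ and $g$ is $L$-Lipschitz) satisfies $\left\| y_t - g(f(\cdots f(f(0, u_{t-\tau}, 0), u_{t-\tau+1}, 0), \cdots, u_{t-1}, 0), u_t) \right\|_2 \leq CL\rho^\tau \|x_{t-\tau}\|_2 + CL\sum_{k=1}^{\tau}\rho^k\|w_{t-k}\|_2$ for all $t \geq \tau$. -/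
/-- `comp f k x u w` is the `k`-fold composition `f^{(k)}` applied with starting
state `x`, the oldest input `u 0` and disturbance `w 0` being used first. -/
def comp {n m d : ℕ}
    (f : EuclideanSpace ℝ (Fin n) → EuclideanSpace ℝ (Fin m) →
      EuclideanSpace ℝ (Fin d) → EuclideanSpace ℝ (Fin n)) :
    ℕ → EuclideanSpace ℝ (Fin n) → (ℕ → EuclideanSpace ℝ (Fin m)) →
      (ℕ → EuclideanSpace ℝ (Fin d)) → EuclideanSpace ℝ (Fin n)
  | 0, x, _, _ => x
  | (k + 1), x, u, w => comp f k (f x (u 0) (w 0)) (fun i => u (i + 1)) (fun i => w (i + 1))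

theorem stmt_3 {n m d r : ℕ}
    (f : EuclideanSpace ℝ (Fin n) → EuclideanSpace ℝ (Fin m) →
      EuclideanSpace ℝ (Fin d) → EuclideanSpace ℝ (Fin n))
    (g : EuclideanSpace ℝ (Fin n) → EuclideanSpace ℝ (Fin m) → EuclideanSpace ℝ (Fin r))
    (C ρ L : ℝ) (hC : 0 < C) (hρ0 : 0 < ρ) (hρ1 : ρ < 1) (hL : 0 < L)
    -- `g` is `L`-Lipschitz:
    (hg : ∀ x x' u u', ‖g x u - g x' u'‖ ≤ L * (‖x - x'‖ + ‖u - u'‖))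
    -- `f^{(k)}` is `C ρ^k`-Lipschitz in its oldest arguments, later inputs and
    -- disturbances being fixed:
    (hLip : ∀ k : ℕ, 1 ≤ k →
      ∀ (x x' : EuclideanSpace ℝ (Fin n)) (u u' : ℕ → EuclideanSpace ℝ (Fin m))
        (w w' : ℕ → EuclideanSpace ℝ (Fin d)),
        (∀ i, 1 ≤ i → u i = u' i) → (∀ i, 1 ≤ i → w i = w' i) →
        ‖comp f k x u w - comp f k x' u' w'‖ ≤
          C * ρ ^ k * (‖x - x'‖ + ‖u 0 - u' 0‖ + ‖w 0 - w' 0‖))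
    (x : ℕ → EuclideanSpace ℝ (Fin n)) (u : ℕ → EuclideanSpace ℝ (Fin m))
    (w : ℕ → EuclideanSpace ℝ (Fin d))
    (hx : ∀ t, x (t + 1) = f (x t) (u t) (w t))
    (y : ℕ → EuclideanSpace ℝ (Fin r)) (hy : ∀ t, y t = g (x t) (u t))
    (τ : ℕ) (hτ : 1 ≤ τ) :
    ∀ t : ℕ, τ ≤ t →
      ‖y t - g (comp f τ 0 (fun i => u (t - τ + i)) (fun _ => 0)) (u t)‖ ≤
        C * L * ρ ^ τ * ‖x (t - τ)‖ +
          C * L * ∑ k ∈ Finset.Icc 1 τ, ρ ^ k * ‖w (t - k)‖ := by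
  -- Key lemma: zeroing out disturbances with the same start state.
  have key : ∀ T : ℕ, ∀ (x0 : EuclideanSpace ℝ (Fin n)) (u0 : ℕ → EuclideanSpace ℝ (Fin m))
      (w0 : ℕ → EuclideanSpace ℝ (Fin d)),
      ‖comp f T x0 u0 w0 - comp f T x0 u0 0‖ ≤
        C * ∑ k ∈ Finset.Icc 1 T, ρ ^ k * ‖w0 (T - k)‖ := by
    intro T
    induction T with
    | zero => intro x0 u0 w0; simp [comp]
    | succ T ih =>
      intro x0 u0 w0
      set w1 : ℕ → EuclideanSpace ℝ (Fin d) := fun i => if i = 0 then 0 else w0 i with hw1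
      have hAB : ‖comp f (T+1) x0 u0 w0 - comp f (T+1) x0 u0 w1‖ ≤ C * ρ ^ (T+1) * ‖w0 0‖ := by
        have h := hLip (T+1) (by omega) x0 x0 u0 u0 w0 w1 (fun i _ => rfl)
          (fun i hi => (if_neg (by omega : ¬ i = 0)).symm)
        simpa [hw1] using h
      have hBT : ‖comp f (T+1) x0 u0 w1 - comp f (T+1) x0 u0 0‖ ≤
          C * ∑ k ∈ Finset.Icc 1 T, ρ ^ k * ‖w0 (T + 1 - k)‖ := by
        have hB : comp f (T+1) x0 u0 w1 =
            comp f T (f x0 (u0 0) 0) (fun i => u0 (i+1)) (fun i => w0 (i+1)) := by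
          have e2 : (fun i => w1 (i+1)) = fun i => w0 (i+1) := by
            funext i
            exact if_neg (by omega : ¬ i + 1 = 0)
          show comp f T (f x0 (u0 0) (w1 0)) (fun i => u0 (i+1)) (fun i => w1 (i+1)) = _
          rw [e2]
          rfl
        have hT0 : comp f (T+1) x0 u0 0 =
            comp f T (f x0 (u0 0) 0) (fun i => u0 (i+1)) 0 := rfl
        rw [hB, hT0]
        have h := ih (f x0 (u0 0) 0) (fun i => u0 (i+1)) (fun i => w0 (i+1))
        refine h.trans (le_of_eq ?_)
        congr 1
        refine Finset.sum_congr rfl (fun k hk => ?_)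
        obtain ⟨hk1, hk2⟩ := Finset.mem_Icc.mp hk
        show ρ ^ k * ‖w0 (T - k + 1)‖ = ρ ^ k * ‖w0 (T + 1 - k)‖
        rw [show T - k + 1 = T + 1 - k from by omega]
      have htri : ‖comp f (T+1) x0 u0 w0 - comp f (T+1) x0 u0 0‖ ≤
          ‖comp f (T+1) x0 u0 w0 - comp f (T+1) x0 u0 w1‖ +
          ‖comp f (T+1) x0 u0 w1 - comp f (T+1) x0 u0 0‖ := by
        have := norm_sub_le_norm_sub_add_norm_sub (comp f (T+1) x0 u0 w0)
          (comp f (T+1) x0 u0 w1) (comp f (T+1) x0 u0 0)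
        exact this
      have hsum : C * ∑ k ∈ Finset.Icc 1 (T+1), ρ ^ k * ‖w0 (T + 1 - k)‖ =
          C * ρ ^ (T+1) * ‖w0 0‖ + C * ∑ k ∈ Finset.Icc 1 T, ρ ^ k * ‖w0 (T + 1 - k)‖ := by
        rw [Finset.sum_Icc_succ_top (by omega : 1 ≤ T + 1)]
        simp [mul_add]
        ring
      rw [hsum]
      exact htri.trans (add_le_add hAB hBT)
  -- Trajectory identity.
  have traj : ∀ k s : ℕ, x (s + k) = comp f k (x s) (fun i => u (s + i)) (fun i => w (s + i)) := by
    intro k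
    induction k with
    | zero => intro s; simp [comp]
    | succ k ih =>
      intro s
      rw [show s + (k+1) = (s+1) + k from by omega, ih (s+1)]
      have hu : (fun i => u (s + 1 + i)) = (fun i => u (s + (i+1))) := by
        funext i; rw [show s + 1 + i = s + (i + 1) from by omega]
      have hw : (fun i => w (s + 1 + i)) = (fun i => w (s + (i+1))) := by
        funext i; rw [show s + 1 + i = s + (i + 1) from by omega]
      rw [hu, hw, hx s]
      rfl
  intro t ht
  have hxt : x t = comp f τ (x (t - τ)) (fun i => u (t - τ + i)) (fun i => w (t - τ + i)) := by
    have h := traj τ (t - τ)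
    rwa [Nat.sub_add_cancel ht] at h
  set U : ℕ → EuclideanSpace ℝ (Fin m) := fun i => u (t - τ + i) with hU
  set W : ℕ → EuclideanSpace ℝ (Fin d) := fun i => w (t - τ + i) with hW
  have hmid : ‖x t - comp f τ 0 U (fun _ => 0)‖ ≤
      C * ρ ^ τ * ‖x (t - τ)‖ + C * ∑ k ∈ Finset.Icc 1 τ, ρ ^ k * ‖w (t - k)‖ := by
    rw [hxt]
    have h1 : ‖comp f τ (x (t - τ)) U W - comp f τ (x (t - τ)) U 0‖ ≤
        C * ∑ k ∈ Finset.Icc 1 τ, ρ ^ k * ‖w (t - k)‖ := by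
      have h := key τ (x (t - τ)) U W
      refine h.trans (le_of_eq ?_)
      congr 1
      refine Finset.sum_congr rfl (fun k hk => ?_)
      obtain ⟨hk1, hk2⟩ := Finset.mem_Icc.mp hk
      show ρ ^ k * ‖w (t - τ + (τ - k))‖ = ρ ^ k * ‖w (t - k)‖
      rw [show t - τ + (τ - k) = t - k from by omega]
    have h2 : ‖comp f τ (x (t - τ)) U 0 - comp f τ 0 U 0‖ ≤ C * ρ ^ τ * ‖x (t - τ)‖ := by
      have h := hLip τ hτ (x (t - τ)) 0 U U 0 0 (fun _ _ => rfl) (fun _ _ => rfl)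
      simpa using h
    have htri := norm_sub_le_norm_sub_add_norm_sub (comp f τ (x (t - τ)) U W)
      (comp f τ (x (t - τ)) U 0) (comp f τ 0 U 0)
    have : (fun _ : ℕ => (0 : EuclideanSpace ℝ (Fin d))) = (0 : ℕ → EuclideanSpace ℝ (Fin d)) := rfl
    rw [this]
    calc ‖comp f τ (x (t - τ)) U W - comp f τ 0 U 0‖
        ≤ ‖comp f τ (x (t - τ)) U W - comp f τ (x (t - τ)) U 0‖ +
          ‖comp f τ (x (t - τ)) U 0 - comp f τ 0 U 0‖ := htri
      _ ≤ C * ∑ k ∈ Finset.Icc 1 τ, ρ ^ k * ‖w (t - k)‖ + C * ρ ^ τ * ‖x (t - τ)‖ :=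
          add_le_add h1 h2
      _ = _ := by ring
  rw [hy t]
  have hgb := hg (x t) (comp f τ 0 U (fun _ => 0)) (u t) (u t)
  simp only [sub_self, norm_zero, add_zero] at hgb
  calc ‖g (x t) (u t) - g (comp f τ 0 U (fun _ => 0)) (u t)‖
      ≤ L * ‖x t - comp f τ 0 U (fun _ => 0)‖ := hgb
    _ ≤ L * (C * ρ ^ τ * ‖x (t - τ)‖ + C * ∑ k ∈ Finset.Icc 1 τ, ρ ^ k * ‖w (t - k)‖) :=
        mul_le_mul_of_nonneg_left hmid hL.le
    _ = C * L * ρ ^ τ * ‖x (t - τ)‖ + C * L * ∑ k ∈ Finset.Icc 1 τ, ρ ^ k * ‖w (t - k)‖ := by ring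
end

section
/- Suppose for all matrices $\Delta \in \mathbb{R}^{r \times M}$ with $\|\Delta\|_F = 1$ one has $\sum_{t=\tau}^{T-1}\left(\mathbb{I}\{W_t = 0\} - \mathbb{I}\{W_t \neq 0\}\right)\|\Delta\, \Phi_t\|_2 > 0$, where $y_t = G^*\Phi_t + W_t$. Then $G^*$ is the unique minimizer of $G \mapsto \sum_{t=\tau}^{T-1}\|y_t - G\Phi_t\|_2$ over $\mathbb{R}^{r\times M}$. -/
open scoped Classical

/-- Euclidean norm of a finite tuple of reals. -/
noncomputable def enorm2 {k : ℕ} (v : Fin k → ℝ) : ℝ := Real.sqrt (∑ i, v i ^ 2)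

lemma enorm2_eq_norm {k : ℕ} (v : Fin k → ℝ) :
    enorm2 v = ‖(WithLp.equiv 2 (Fin k → ℝ)).symm v‖ := by
  rw [EuclideanSpace.norm_eq]
  simp [enorm2, sq_abs]

lemma enorm2_nonneg {k : ℕ} (v : Fin k → ℝ) : 0 ≤ enorm2 v :=
  Real.sqrt_nonneg _

lemma enorm2_zero {k : ℕ} : enorm2 (0 : Fin k → ℝ) = 0 := by
  simp [enorm2]

lemma enorm2_neg {k : ℕ} (v : Fin k → ℝ) : enorm2 (-v) = enorm2 v := by
  simp [enorm2]

lemma enorm2_smul {k : ℕ} (c : ℝ) (v : Fin k → ℝ) :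
    enorm2 (c • v) = |c| * enorm2 v := by
  rw [enorm2_eq_norm, enorm2_eq_norm]
  have : (WithLp.equiv 2 (Fin k → ℝ)).symm (c • v)
      = c • (WithLp.equiv 2 (Fin k → ℝ)).symm v := rfl
  rw [this, norm_smul, Real.norm_eq_abs]

lemma enorm2_sub_ge {k : ℕ} (v w : Fin k → ℝ) :
    enorm2 v - enorm2 w ≤ enorm2 (v - w) := by
  rw [enorm2_eq_norm, enorm2_eq_norm, enorm2_eq_norm]
  have : (WithLp.equiv 2 (Fin k → ℝ)).symm (v - w)
      = (WithLp.equiv 2 (Fin k → ℝ)).symm v - (WithLp.equiv 2 (Fin k → ℝ)).symm w := rfl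
  rw [this]
  exact norm_sub_norm_le _ _

theorem stmt_11 (r M τ T : ℕ)
    (Φ : ℕ → Fin M → ℝ) (W : ℕ → Fin r → ℝ) (Gstar : Matrix (Fin r) (Fin M) ℝ)
    (y : ℕ → Fin r → ℝ) (hy : ∀ t, y t = Gstar.mulVec (Φ t) + W t)
    (hpos : ∀ Δ : Matrix (Fin r) (Fin M) ℝ, Real.sqrt (∑ i, ∑ j, Δ i j ^ 2) = 1 →
      0 < ∑ t ∈ Finset.Ico τ T,
        ((if W t = 0 then (1 : ℝ) else 0) - (if W t ≠ 0 then (1 : ℝ) else 0)) *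
          enorm2 (Δ.mulVec (Φ t))) :
    -- `G*` is the unique minimizer of `G ↦ ∑ₜ ‖yₜ - G Φₜ‖₂`
    (∀ G : Matrix (Fin r) (Fin M) ℝ,
        ∑ t ∈ Finset.Ico τ T, enorm2 (y t - Gstar.mulVec (Φ t)) ≤
          ∑ t ∈ Finset.Ico τ T, enorm2 (y t - G.mulVec (Φ t))) ∧
    (∀ G : Matrix (Fin r) (Fin M) ℝ, G ≠ Gstar →
        ∑ t ∈ Finset.Ico τ T, enorm2 (y t - Gstar.mulVec (Φ t)) <
          ∑ t ∈ Finset.Ico τ T, enorm2 (y t - G.mulVec (Φ t))) := by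
  have hWy : ∀ t, y t - Gstar.mulVec (Φ t) = W t := by
    intro t; rw [hy t]; abel
  have key : ∀ G : Matrix (Fin r) (Fin M) ℝ, G ≠ Gstar →
      ∑ t ∈ Finset.Ico τ T, enorm2 (y t - Gstar.mulVec (Φ t)) <
        ∑ t ∈ Finset.Ico τ T, enorm2 (y t - G.mulVec (Φ t)) := by
    intro G hG
    set D : Matrix (Fin r) (Fin M) ℝ := G - Gstar with hD
    have hDne : D ≠ 0 := sub_ne_zero.mpr hG
    set s : ℝ := Real.sqrt (∑ i, ∑ j, D i j ^ 2) with hs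
    have hsq_nonneg : 0 ≤ ∑ i, ∑ j, D i j ^ 2 :=
      Finset.sum_nonneg fun i _ => Finset.sum_nonneg fun j _ => sq_nonneg _
    have hspos : 0 < s := by
      rw [hs]
      apply Real.sqrt_pos.mpr
      rcases lt_or_eq_of_le hsq_nonneg with h | h
      · exact h
      · exfalso
        apply hDne
        ext i j
        have h1 : ∀ i ∈ (Finset.univ : Finset (Fin r)), ∑ j, D i j ^ 2 = 0 := by
          intro i _
          have := (Finset.sum_eq_zero_iff_of_nonneg
            (fun i _ => Finset.sum_nonneg fun j _ => sq_nonneg (D i j))).mp h.symm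
          exact this i (Finset.mem_univ i)
        have h2 := (Finset.sum_eq_zero_iff_of_nonneg
          (fun j _ => sq_nonneg (D i j))).mp (h1 i (Finset.mem_univ i)) j (Finset.mem_univ j)
        have := pow_eq_zero_iff (n := 2) (by norm_num) |>.mp h2
        simpa using this
    set Δ : Matrix (Fin r) (Fin M) ℝ := s⁻¹ • D with hΔ
    have hΔnorm : Real.sqrt (∑ i, ∑ j, Δ i j ^ 2) = 1 := by
      have : ∑ i, ∑ j, Δ i j ^ 2 = (s⁻¹)^2 * ∑ i, ∑ j, D i j ^ 2 := by
        simp [hΔ, Matrix.smul_apply, mul_pow, Finset.mul_sum]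
      rw [this, Real.sqrt_mul (sq_nonneg _), Real.sqrt_sq_eq_abs,
        abs_of_nonneg (inv_nonneg.mpr hspos.le), ← hs, inv_mul_cancel₀ hspos.ne']
    have hΔmul : ∀ t, enorm2 (Δ.mulVec (Φ t)) = s⁻¹ * enorm2 (D.mulVec (Φ t)) := by
      intro t
      have : Δ.mulVec (Φ t) = s⁻¹ • D.mulVec (Φ t) := by
        rw [hΔ, Matrix.smul_mulVec]
      rw [this, enorm2_smul, abs_of_nonneg (le_of_lt (inv_pos.mpr hspos))]
    have hS := hpos Δ hΔnorm
    -- S' := ∑ c_t * enorm2 (D Φ_t) > 0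
    have hS' : 0 < ∑ t ∈ Finset.Ico τ T,
        ((if W t = 0 then (1 : ℝ) else 0) - (if W t ≠ 0 then (1 : ℝ) else 0)) *
          enorm2 (D.mulVec (Φ t)) := by
      have heq : ∑ t ∈ Finset.Ico τ T,
          ((if W t = 0 then (1 : ℝ) else 0) - (if W t ≠ 0 then (1 : ℝ) else 0)) *
            enorm2 (D.mulVec (Φ t))
          = s * ∑ t ∈ Finset.Ico τ T,
          ((if W t = 0 then (1 : ℝ) else 0) - (if W t ≠ 0 then (1 : ℝ) else 0)) *
            enorm2 (Δ.mulVec (Φ t)) := by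
        rw [Finset.mul_sum]
        apply Finset.sum_congr rfl
        intro t _
        rw [hΔmul t]
        field_simp
      rw [heq]
      exact mul_pos hspos hS
    -- pointwise bound
    have hpt : ∀ t ∈ Finset.Ico τ T,
        enorm2 (W t) + ((if W t = 0 then (1 : ℝ) else 0) - (if W t ≠ 0 then (1 : ℝ) else 0)) *
          enorm2 (D.mulVec (Φ t)) ≤ enorm2 (y t - G.mulVec (Φ t)) := by
      intro t _
      have hyG : y t - G.mulVec (Φ t) = W t - D.mulVec (Φ t) := by
        rw [hy t, hD, Matrix.sub_mulVec]
        abel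
      rw [hyG]
      by_cases hW : W t = 0
      · rw [hW]
        have h0 : (0 : Fin r → ℝ) - D.mulVec (Φ t) = -(D.mulVec (Φ t)) := by abel
        rw [h0, enorm2_neg, enorm2_zero]
        simp
      · simp only [if_neg hW, if_pos hW]
        have := enorm2_sub_ge (W t) (D.mulVec (Φ t))
        linarith
    calc ∑ t ∈ Finset.Ico τ T, enorm2 (y t - Gstar.mulVec (Φ t))
        = ∑ t ∈ Finset.Ico τ T, enorm2 (W t) := by
          apply Finset.sum_congr rfl; intro t _; rw [hWy t]
      _ < ∑ t ∈ Finset.Ico τ T, (enorm2 (W t) +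
            ((if W t = 0 then (1 : ℝ) else 0) - (if W t ≠ 0 then (1 : ℝ) else 0)) *
              enorm2 (D.mulVec (Φ t))) := by
          rw [Finset.sum_add_distrib]; linarith
      _ ≤ ∑ t ∈ Finset.Ico τ T, enorm2 (y t - G.mulVec (Φ t)) :=
          Finset.sum_le_sum hpt
  refine ⟨fun G => ?_, key⟩
  by_cases hG : G = Gstar
  · rw [hG]
  · exact le_of_lt (key G hG)
end

section
/- For the scalar system $x_{t+1} = \rho(x_t + u_t + w_t)$, $y_t = L(x_t + u_t)$ with $0 < \rho < 1$, $L > 0$, and the function $\beta(x) = \tanh(x)/\tanh(1)$ for $|x| \leq 1$ and $\beta(x) = x$ otherwise: whenever $x_{t-\tau+1} = \rho(x_{t-\tau} + u_{t-\tau} + w_{t-\tau}) \geq 1$, the two expressions $L(\rho(\cdots \rho(\rho(x_{t-\tau}+u_{t-\tau}+w_{t-\tau})+u_{t-\tau+1}+w_{t-\tau+1})\cdots+u_{t-1}+w_{t-1})+u_t)$ and the same expression with $\rho(x_{t-\tau}+u_{t-\tau}+w_{t-\tau})$ replaced by $\beta(\rho(x_{t-\tau}+u_{t-\tau}+w_{t-\tau}))$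 are equal; yet when $x_{t-\tau}=0$ and all disturbances are $0$ and $u_{t-\tau} \in \{-1,1\}$, they differ in absolute value by exactly $L\rho^{\tau-1}|\rho - \beta(\rho)| = L\rho^\tau\left|1 - \frac{\tanh(\rho)}{\rho\tanh(1)}\right| > 0$. -/
/-- `β(x) = tanh(x)/tanh(1)` for `|x| ≤ 1` and `β(x) = x` otherwise. -/
noncomputable def betaFn (x : ℝ) : ℝ :=
  if |x| ≤ 1 then Real.tanh x / Real.tanh 1 else x

/-- The state iteration `s₀ = x`, `s_{k+1} = ρ (s_k + u_k + w_k)`. -/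
def stateIter (ρ x : ℝ) (u w : ℕ → ℝ) : ℕ → ℝ
  | 0 => x
  | k + 1 => ρ * (stateIter ρ x u w k + u k + w k)

lemma tanh_one_pos : 0 < Real.tanh 1 := by
  rw [Real.tanh_eq_sinh_div_cosh]
  exact div_pos (by positivity) (Real.cosh_pos 1)

lemma betaFn_of_one_le {y : ℝ} (hy : 1 ≤ y) : betaFn y = y := by
  unfold betaFn
  split_ifs with h
  · have : y = 1 := le_antisymm ((abs_le.mp h).2) hy
    rw [this, div_self tanh_one_pos.ne']
  · rfl

lemma betaFn_neg (x : ℝ) : betaFn (-x) = -betaFn x := by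
  unfold betaFn
  simp [abs_neg, Real.tanh_neg, neg_div]
  split_ifs <;> ring

lemma stateIter_shift (ρ x : ℝ) (u w : ℕ → ℝ) :
    ∀ k, stateIter ρ x u w (k + 1) =
      stateIter ρ (ρ * (x + u 0 + w 0)) (fun k => u (k + 1)) (fun k => w (k + 1)) k := by
  intro k
  induction k with
  | zero => simp [stateIter]
  | succ n ih =>
    have h1 : stateIter ρ x u w (n + 1 + 1)
        = ρ * (stateIter ρ x u w (n + 1) + u (n + 1) + w (n + 1)) := rfl
    rw [h1, ih]; rfl

lemma stateIter_sub (ρ a b : ℝ) (u w : ℕ → ℝ) :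
    ∀ k, stateIter ρ a u w k - stateIter ρ b u w k = ρ ^ k * (a - b) := by
  intro k
  induction k with
  | zero => simp [stateIter]
  | succ n ih =>
    simp only [stateIter, pow_succ]
    linear_combination ρ * ih

lemma hasDerivAt_tanh (x : ℝ) : HasDerivAt Real.tanh (1 / Real.cosh x ^ 2) x := by
  have h := (Real.hasDerivAt_sinh x).div (Real.hasDerivAt_cosh x) (Real.cosh_pos x).ne'
  have heq : Real.tanh = fun y => Real.sinh y / Real.cosh y :=
    funext fun y => Real.tanh_eq_sinh_div_cosh y
  rw [heq, show (fun y => Real.sinh y / Real.cosh y) = Real.sinh / Real.cosh from rfl]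
  refine h.congr_deriv ?_
  congr 1
  have := Real.cosh_sq_sub_sinh_sq x
  nlinarith [this]

lemma tanh_strictConcave : StrictConcaveOn ℝ (Set.Icc (0:ℝ) 1) Real.tanh := by
  apply strictConcaveOn_of_deriv2_neg (convex_Icc 0 1) (continuous_iff_continuousAt.mpr
    fun y => (hasDerivAt_tanh y).differentiableAt.continuousAt).continuousOn
  intro x hx
  rw [interior_Icc] at hx
  have hd : deriv Real.tanh = fun y => 1 / Real.cosh y ^ 2 :=
    funext fun y => (hasDerivAt_tanh y).deriv
  have h2 : deriv (deriv Real.tanh) x < 0 := by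
    rw [hd]
    have hc : (Real.cosh x ^ 2 : ℝ) ≠ 0 := by positivity
    have h := (((Real.hasDerivAt_cosh x).pow 2).inv hc)
    have heq : (fun y : ℝ => 1 / Real.cosh y ^ 2) = fun y => (Real.cosh y ^ 2)⁻¹ := by
      funext y; rw [one_div]
    rw [heq, show (fun y : ℝ => (Real.cosh y ^ 2)⁻¹) = (Real.cosh ^ 2)⁻¹ from rfl, h.deriv]
    have hs : 0 < Real.sinh x := (Real.sinh_pos_iff).mpr hx.1
    have hcp := Real.cosh_pos x
    have hnum : 0 < ((2:ℕ) : ℝ) * Real.cosh x ^ (2 - 1) * Real.sinh x :=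
      mul_pos (mul_pos (by norm_num) (pow_pos hcp _)) hs
    have hden : 0 < (Real.cosh x ^ 2) ^ 2 := by positivity
    exact div_neg_of_neg_of_pos (neg_neg_of_pos hnum) hden
  simpa [Function.iterate_succ, Function.iterate_zero, Function.comp] using h2

lemma tanh_gt (ρ : ℝ) (hρ0 : 0 < ρ) (hρ1 : ρ < 1) : ρ * Real.tanh 1 < Real.tanh ρ := by
  have h := tanh_strictConcave.2 (Set.left_mem_Icc.mpr zero_le_one)
    (Set.right_mem_Icc.mpr zero_le_one) (by norm_num)
    (show (0:ℝ) < 1 - ρ by linarith) hρ0 (by ring)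
  simpa [Real.tanh_zero, smul_eq_mul] using h

theorem stmt_19 (ρ L : ℝ) (hρ0 : 0 < ρ) (hρ1 : ρ < 1) (hL : 0 < L)
    (τ : ℕ) (hτ : 1 ≤ τ) :
    -- (1) indistinguishability: whenever `x_{t-τ+1} = ρ (x_{t-τ}+u_{t-τ}+w_{t-τ}) ≥ 1`,
    -- the two expressions coincide
    (∀ (x : ℝ) (u w : ℕ → ℝ), 1 ≤ ρ * (x + u 0 + w 0) →
      L * (stateIter ρ x u w τ + u τ) =
        L * (stateIter ρ (betaFn (ρ * (x + u 0 + w 0)))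
              (fun k => u (k + 1)) (fun k => w (k + 1)) (τ - 1) + u τ)) ∧
    -- (2) with `x_{t-τ} = 0`, zero disturbances and `u_{t-τ} ∈ {-1,1}`, they
    -- differ by exactly `L ρ^{τ-1} |ρ - β(ρ)| = L ρ^τ |1 - tanh ρ/(ρ tanh 1)| > 0`
    (∀ u : ℕ → ℝ, (u 0 = 1 ∨ u 0 = -1) →
      |L * (stateIter ρ 0 u (fun _ => 0) τ + u τ) -
        L * (stateIter ρ (betaFn (ρ * (0 + u 0 + 0)))
              (fun k => u (k + 1)) (fun _ => 0) (τ - 1) + u τ)| =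
        L * ρ ^ (τ - 1) * |ρ - betaFn ρ|) ∧
    L * ρ ^ (τ - 1) * |ρ - betaFn ρ| =
      L * ρ ^ τ * |1 - Real.tanh ρ / (ρ * Real.tanh 1)| ∧
    0 < L * ρ ^ τ * |1 - Real.tanh ρ / (ρ * Real.tanh 1)| := by
  obtain ⟨τ', rfl⟩ : ∃ τ', τ = τ' + 1 := ⟨τ - 1, (Nat.sub_add_cancel hτ).symm⟩
  have hsub : τ' + 1 - 1 = τ' := rfl
  have htanh1 := tanh_one_pos
  have hβρ : betaFn ρ = Real.tanh ρ / Real.tanh 1 := by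
    unfold betaFn; rw [if_pos (by rw [abs_of_pos hρ0]; linarith)]
  have hgt := tanh_gt ρ hρ0 hρ1
  refine ⟨?_, ?_, ?_, ?_⟩
  · intro x u w h1
    rw [hsub, betaFn_of_one_le h1, stateIter_shift]
  · intro u hu
    rw [hsub, stateIter_shift]
    rw [show L * (stateIter ρ (ρ * (0 + u 0 + 0)) (fun k => u (k + 1)) (fun k => (fun _ : ℕ => (0:ℝ)) (k + 1)) τ' + u (τ' + 1)) -
        L * (stateIter ρ (betaFn (ρ * (0 + u 0 + 0))) (fun k => u (k + 1)) (fun _ => 0) τ' + u (τ' + 1)) =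
        L * (stateIter ρ (ρ * (0 + u 0 + 0)) (fun k => u (k + 1)) (fun _ => 0) τ' -
          stateIter ρ (betaFn (ρ * (0 + u 0 + 0))) (fun k => u (k + 1)) (fun _ => 0) τ') by ring]
    rw [stateIter_sub, abs_mul, abs_mul, abs_of_pos hL, abs_pow, abs_of_pos hρ0]
    rcases hu with h | h <;> rw [h]
    · norm_num; ring
    · have : ρ * (0 + (-1:ℝ) + 0) = -ρ := by ring
      rw [this, betaFn_neg]
      rw [show -ρ - -betaFn ρ = -(ρ - betaFn ρ) by ring, abs_neg]
      ring
  · rw [hβρ]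
    rw [show ρ - Real.tanh ρ / Real.tanh 1 = ρ * (1 - Real.tanh ρ / (ρ * Real.tanh 1)) by
      field_simp]
    rw [abs_mul, abs_of_pos hρ0, hsub, pow_succ]
    ring
  · have h1 : Real.tanh ρ / (ρ * Real.tanh 1) > 1 := by
      rw [gt_iff_lt, lt_div_iff₀ (by positivity)]
      linarith
    have : |1 - Real.tanh ρ / (ρ * Real.tanh 1)| > 0 := by
      rw [abs_sub_comm, abs_of_pos (by linarith)]
      linarith
    positivity
end
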